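/- arXiv:1112.4578 — 5 statements merged into one kernel-verified Lean document; each statement's English description precedes it below -/
import Mathlib

section
/- For any string T of length n over a finite alphabet and any k ≤ n, the k-th order empirical entropy satisfies H_k(TT) ≥ H_k(T), where TT denotes the concatenation of T with itself. -/
/-!
The characters following a context `W` in `T ++ T` split into those at occurrences starting in
the second copy, which form `follow T W`, and those at occurrences starting in the first copy,
which contain `follow T W` as a subsequence. The unnormalised entropy `|S| * H0 S` is
superadditive under concatenation (termwise, by the log-sum inequality) and invariant under
permutation, hence monotone along sublists. So for every context it at least doubles when
passing from `T` to `T ++ T`, while the normalising length `|T|` exactly doubles.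
-/

variable {α : Type*} [Fintype α] [DecidableEq α]

/-- Zeroth-order empirical entropy of a string. -/
noncomputable def H0 (S : List α) : ℝ :=
  -∑ c : α, ((S.count c : ℝ) / S.length) * Real.logb 2 ((S.count c : ℝ) / S.length)

/-- `follow S W` is the string `S^W` of characters immediately following
occurrences of the context `W` in `S`. -/
def follow (S W : List α) : List α :=
  (List.range S.length).filterMap (fun i =>
    if W <+: S.drop i then (S.drop (i + W.length)).head? else none)

/-- `k`-th order empirical entropy. -/
noncomputable def Hk (k : ℕ) (S : List α) : ℝ :=
  ∑ W : Fin k → α,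
    ((follow S (List.ofFn W)).length : ℝ) / S.length * H0 (follow S (List.ofFn W))

open Real

namespace Real

/-- The two-term log-sum inequality. -/
theorem add_mul_log_div_add_le {a b c d : ℝ} (ha : 0 ≤ a) (hb : 0 < b) (hc : 0 ≤ c)
    (hd : 0 < d) :
    (a + c) * log ((a + c) / (b + d)) ≤ a * log (a / b) + c * log (c / d) := by
  have hbd : 0 < b + d := by positivity
  -- Jensen for `x log x` at the points `a / b`, `c / d` with weights `b / (b + d)`, `d / (b + d)`
  have jensen := convexOn_mul_log.2 (Set.mem_Ici.2 (div_nonneg ha hb.le))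
    (Set.mem_Ici.2 (div_nonneg hc hd.le)) (div_nonneg hb.le hbd.le) (div_nonneg hd.le hbd.le)
    (by field_simp)
  have hmix : b / (b + d) * (a / b) + d / (b + d) * (c / d) = (a + c) / (b + d) := by
    field_simp
  simp only [smul_eq_mul, hmix] at jensen
  calc (a + c) * log ((a + c) / (b + d))
      = (b + d) * ((a + c) / (b + d) * log ((a + c) / (b + d))) := by field_simp
    _ ≤ (b + d) *
          (b / (b + d) * (a / b * log (a / b)) + d / (b + d) * (c / d * log (c / d))) := by
        gcongr
    _ = a * log (a / b) + c * log (c / d) := by field_simp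

theorem add_mul_logb_div_add_le {B a b c d : ℝ} (hB : 1 < B) (ha : 0 ≤ a) (hb : 0 < b)
    (hc : 0 ≤ c) (hd : 0 < d) :
    (a + c) * logb B ((a + c) / (b + d)) ≤ a * logb B (a / b) + c * logb B (c / d) := by
  simp only [logb, ← mul_div_assoc, ← add_div]
  exact div_le_div_of_nonneg_right (add_mul_log_div_add_le ha hb hc hd) (log_nonneg hB.le)

end Real

theorem length_mul_H0 (S : List α) :
    S.length * H0 S = -∑ c : α, (S.count c : ℝ) * logb 2 (S.count c / S.length) := by
  rw [H0, mul_neg, Finset.mul_sum]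
  congr 1
  refine Finset.sum_congr rfl fun c _ => ?_
  rcases eq_or_ne S.length 0 with hS | hS
  · simp [List.length_eq_zero_iff.1 hS]
  · rw [← mul_assoc, mul_div_cancel₀ _ (Nat.cast_ne_zero.2 hS)]

theorem H0_nonneg (S : List α) : 0 ≤ H0 S := by
  rw [H0, neg_nonneg]
  refine Finset.sum_nonpos fun c _ => ?_
  have hfreq : (S.count c : ℝ) / S.length ≤ 1 :=
    div_le_one_of_le₀ (by exact_mod_cast List.count_le_length) (Nat.cast_nonneg _)
  exact mul_nonpos_of_nonneg_of_nonpos (by positivity)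
    (logb_nonpos one_lt_two (by positivity) hfreq)

theorem List.Perm.H0_eq {S S' : List α} (h : S.Perm S') : H0 S = H0 S' := by
  simp only [H0, h.length_eq, h.count_eq]

theorem length_mul_H0_add_le_append (S S' : List α) :
    S.length * H0 S + S'.length * H0 S' ≤ (S ++ S').length * H0 (S ++ S') := by
  rcases eq_or_ne S [] with rfl | hS
  · simp
  rcases eq_or_ne S' [] with rfl | hS'
  · simp
  have hpos : ∀ {L : List α}, L ≠ [] → (0 : ℝ) < L.length := fun hL => by
    exact_mod_cast List.length_pos_iff.2 hL
  rw [length_mul_H0, length_mul_H0, length_mul_H0, ← neg_add, neg_le_neg_iff,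
    ← Finset.sum_add_distrib]
  simp only [List.count_append, List.length_append, Nat.cast_add]
  exact Finset.sum_le_sum fun c _ =>
    add_mul_logb_div_add_le one_lt_two (Nat.cast_nonneg _) (hpos hS) (Nat.cast_nonneg _) (hpos hS')

theorem List.Sublist.length_mul_H0_le {S S' : List α} (h : S.Sublist S') :
    S.length * H0 S ≤ S'.length * H0 S' := by
  obtain ⟨R, hperm⟩ := h.exists_perm_append
  calc S.length * H0 S ≤ S.length * H0 S + R.length * H0 R :=
        le_add_of_nonneg_right (mul_nonneg (Nat.cast_nonneg _) (H0_nonneg R))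
    _ ≤ (S ++ R).length * H0 (S ++ R) := length_mul_H0_add_le_append S R
    _ = S'.length * H0 S' := by rw [hperm.length_eq, hperm.H0_eq]

theorem List.filterMap_sublist_filterMap {β γ : Type*} {f g : β → Option γ}
    (h : ∀ a b, f a = some b → g a = some b) (l : List β) :
    (l.filterMap f).Sublist (l.filterMap g) := by
  induction l with
  | nil => exact List.Sublist.slnil
  | cons a l ih =>
    rw [List.filterMap_cons, List.filterMap_cons]
    cases hfa : f a with
    | none =>
      cases g a with
      | none => exact ih
      | some b => exact ih.cons b
    | some b => rw [h a b hfa]; exact ih.cons_cons b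

theorem exists_follow_append {β : Type*} [DecidableEq β] (S T W : List β) :
    ∃ A, follow (S ++ T) W = A ++ follow T W ∧ (follow S W).Sublist A := by
  refine ⟨(List.range S.length).filterMap fun i =>
    if W <+: (S ++ T).drop i then ((S ++ T).drop (i + W.length)).head? else none, ?_, ?_⟩
  · rw [follow, List.length_append, List.range_add, List.filterMap_append, List.filterMap_map]
    congr 1
    refine List.filterMap_congr fun i _ => ?_
    simp only [Function.comp_apply, Nat.add_assoc, List.drop_length_add_append]
  · refine List.filterMap_sublist_filterMap (fun i c hc => ?_) _
    have hprefix (j : ℕ) : S.drop j <+: (S ++ T).drop j := (List.prefix_append S T).drop j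
    by_cases hW : W <+: S.drop i
    · rw [if_pos hW] at hc
      obtain ⟨t, ht⟩ := hprefix (i + W.length)
      rw [if_pos (hW.trans (hprefix i)), ← ht, List.head?_append, hc]
      rfl
    · simp [hW] at hc

theorem two_mul_length_mul_H0_follow_le (T W : List α) :
    2 * ((follow T W).length * H0 (follow T W)) ≤
      (follow (T ++ T) W).length * H0 (follow (T ++ T) W) := by
  obtain ⟨A, hsplit, hsub⟩ := exists_follow_append T T W
  rw [hsplit, two_mul]
  exact (add_le_add_left hsub.length_mul_H0_le _).trans (length_mul_H0_add_le_append A _)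

theorem Hk_square_ge_general (T : List α) (k : ℕ) :
    Hk k T ≤ Hk k (T ++ T) := by
  refine Finset.sum_le_sum fun W _ => ?_
  have hlen : ((T ++ T).length : ℝ) = 2 * T.length := by
    rw [List.length_append, Nat.cast_add, two_mul]
  rw [hlen, div_mul_eq_mul_div, div_mul_eq_mul_div,
    ← mul_div_mul_left _ (T.length : ℝ) two_ne_zero]
  exact div_le_div_of_nonneg_right (two_mul_length_mul_H0_follow_le T _) (by positivity)

/-- For any string `T` and any `k ≤ |T|`, `H_k(TT) ≥ H_k(T)`. -/
theorem Hk_square_ge (T : List α) (k : ℕ) (hk : k ≤ T.length) :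
    Hk k T ≤ Hk k (T ++ T) :=
  Hk_square_ge_general T k
end

section
/- All phrases generated by an LZ-End parse of a string are pairwise distinct. -/
variable {α : Type*} [DecidableEq α]

/-- `Z` is an LZ-End parsing of `T`: the phrases concatenate to `T`, each
phrase consists of a (possibly empty) copied part plus one trailing
character, the copied part of phrase `p` is a suffix of `Z[1]⋯Z[q]` for
some `q < p` (1-based; here `q ≤ p` with `p` 0-based), and the copied part
is chosen greedily (longest possible). -/
def IsLZEndParsing (T : List α) (Z : List (List α)) : Prop :=
  Z.flatten = T ∧ (∀ w ∈ Z, w ≠ []) ∧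
  (∀ p : Fin Z.length, ∃ q ≤ (p : ℕ), (Z.get p).dropLast <:+ (Z.take q).flatten) ∧
  (∀ p : Fin Z.length, ∀ w : List α, w <+: (Z.drop (p : ℕ)).flatten →
      (∃ q ≤ (p : ℕ), w <:+ (Z.take q).flatten) → w.length < (Z.get p).length)

private lemma lz_aux (Z : List (List α)) (i j : ℕ) (hi : i < Z.length)
    (hj : j < Z.length) (hij : i < j)
    (hgreedy : ∀ p : Fin Z.length, ∀ w : List α, w <+: (Z.drop (p : ℕ)).flatten →
      (∃ q ≤ (p : ℕ), w <:+ (Z.take q).flatten) → w.length < (Z.get p).length)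
    (heq : Z.get ⟨i, hi⟩ = Z.get ⟨j, hj⟩) : False := by
  set w := Z.get ⟨j, hj⟩ with hw
  have hpre : w <+: (Z.drop j).flatten := by
    rw [List.drop_eq_getElem_cons hj, List.flatten_cons]
    exact List.prefix_append _ _
  have hsuf : w <:+ (Z.take (i + 1)).flatten := by
    rw [List.take_succ, List.flatten_append, List.getElem?_eq_getElem hi]
    simp only [Option.toList_some, List.flatten_cons, List.flatten_nil, List.append_nil]
    exact (List.suffix_append _ _).trans (by rw [← heq]; rfl)
  have := hgreedy ⟨j, hj⟩ w hpre ⟨i + 1, hij, hsuf⟩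
  simp only [List.get_eq_getElem] at hw this
  rw [← hw] at this
  exact lt_irrefl _ this

/-- All phrases of an LZ-End parsing are pairwise distinct. -/
theorem lzEnd_phrases_nodup (T : List α) (Z : List (List α))
    (h : IsLZEndParsing T Z) : Z.Nodup := by
  obtain ⟨-, -, -, hgreedy⟩ := h
  rw [List.nodup_iff_injective_get]
  rintro ⟨i, hi⟩ ⟨j, hj⟩ heq
  rcases lt_trichotomy i j with hij | hij | hij
  · exact absurd (lz_aux Z i j hi hj hij hgreedy heq) id
  · simpa using hij
  · exact absurd (lz_aux Z j i hj hi hij hgreedy heq.symm) id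
end

section
/- For any text T of length n ending with a unique sentinel character, the number of phrases of the LZ77 parsing of the square satisfies H^{LZ77}(TT$) ≤ H^{LZ77}(T$) + 1, where H^{LZ77}(S) denotes the number of phrases in the LZ77 parsing of S. -/
variable {α : Type*} [DecidableEq α]

/-- `Z` is an LZ77 parsing of `T`. -/
def IsLZ77Parsing (T : List α) (Z : List (List α)) : Prop :=
  Z.flatten = T ∧ (∀ w ∈ Z, w ≠ []) ∧
  (∀ p : Fin Z.length, (Z.get p).dropLast <:+: (Z.take (p : ℕ)).flatten) ∧
  (∀ p : Fin Z.length, ∀ w : List α, w <+: (Z.drop (p : ℕ)).flatten →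
      w <:+: (Z.take (p : ℕ)).flatten → w.length < (Z.get p).length)

/-!
The LZ77 parsing is greedy, and greedy parsings are optimal: by induction on `i`, the `i`-th
LZ77 phrase starts no earlier than the `i`-th phrase of any factorization whose phrases, less
their last character, occur earlier in the text ("LZ-like" factorizations). Hence no LZ-like
factorization of a text has fewer phrases than its LZ77 parsing.

Given an LZ-like factorization `Y ++ [u ++ [c]]` of `aT$` (its LZ77 parsing, say), replacing
its last phrase by `u ++ [a]` and `T ++ [$]` yields an LZ-like factorization of `aTaT$`: `u`
occurred before, and `T` occurs in the first copy of `aT`.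
-/

section

variable {α : Type*}

theorem List.take_drop_infix_take_of_le {S : List α} {b g k : ℕ} (hbg : b ≤ g)
    (h : (S.drop b).take k <:+: S.take b) : (S.drop g).take (b + k - g) <:+: S.take g := by
  have hsuffix : (S.drop g).take (b + k - g) = ((S.drop b).take k).drop (g - b) := by
    rw [List.drop_take, List.drop_drop, Nat.add_sub_cancel' hbg]
    congr 1
    omega
  rw [hsuffix]
  exact ((List.drop_suffix _ _).isInfix.trans h).trans (List.take_prefix_take_left hbg).isInfix

def phraseStart (Y : List (List α)) (i : ℕ) : ℕ := (Y.take i).flatten.length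

section phraseStart

variable (Y : List (List α)) {i : ℕ}

theorem phraseStart_length : phraseStart Y Y.length = Y.flatten.length := by
  simp [phraseStart]

theorem phraseStart_succ (hi : i < Y.length) :
    phraseStart Y (i + 1) = phraseStart Y i + Y[i].length := by
  rw [phraseStart, phraseStart, ← List.take_concat_get hi, List.concat_eq_append,
    List.flatten_append, List.length_append, List.flatten_singleton]

theorem flatten_take_append_flatten_drop :
    (Y.take i).flatten ++ (Y.drop i).flatten = Y.flatten := by
  rw [← List.flatten_append, List.take_append_drop]

theorem phraseStart_le_length : phraseStart Y i ≤ Y.flatten.length := by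
  rw [← flatten_take_append_flatten_drop Y (i := i), List.length_append, phraseStart]
  omega

theorem flatten_take_eq_take_phraseStart :
    (Y.take i).flatten = Y.flatten.take (phraseStart Y i) := by
  rw [← flatten_take_append_flatten_drop Y (i := i), phraseStart, List.take_left]

theorem flatten_drop_eq_drop_phraseStart :
    (Y.drop i).flatten = Y.flatten.drop (phraseStart Y i) := by
  rw [← flatten_take_append_flatten_drop Y (i := i), phraseStart, List.drop_left]

theorem getElem_eq_take_drop_phraseStart (hi : i < Y.length) :
    Y[i] = (Y.flatten.drop (phraseStart Y i)).take Y[i].length := by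
  rw [← flatten_drop_eq_drop_phraseStart, List.drop_eq_getElem_cons hi, List.flatten_cons,
    List.take_left]

end phraseStart

structure IsLZLikeParsing (S : List α) (Y : List (List α)) : Prop where
  flatten_eq : Y.flatten = S
  dropLast_infix : ∀ i (hi : i < Y.length), Y[i].dropLast <:+: (Y.take i).flatten

namespace IsLZLikeParsing

variable {S : List α} {Y : List (List α)}

theorem take_drop_phraseStart_infix (hY : IsLZLikeParsing S Y) {i : ℕ} (hi : i < Y.length) :
    (S.drop (phraseStart Y i)).take (Y[i].length - 1) <:+: S.take (phraseStart Y i) := by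
  have hfits : Y[i].length ≤ S.length - phraseStart Y i := by
    have hend := phraseStart_le_length Y (i := i + 1)
    rw [phraseStart_succ Y hi, hY.flatten_eq] at hend
    omega
  have h := hY.dropLast_infix i hi
  rw [List.dropLast_eq_take, getElem_eq_take_drop_phraseStart Y hi, List.take_take,
    flatten_take_eq_take_phraseStart, hY.flatten_eq] at h
  simpa [min_eq_left hfits] using h

theorem append_singleton_iff {w : List α} :
    IsLZLikeParsing S (Y ++ [w]) ↔
      IsLZLikeParsing Y.flatten Y ∧ w.dropLast <:+: Y.flatten ∧ Y.flatten ++ w = S := by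
  constructor
  · rintro ⟨hflat, hinf⟩
    refine ⟨⟨rfl, fun i hi => ?_⟩, ?_, by simpa using hflat⟩
    · have h := hinf i (by simp; omega)
      rwa [List.getElem_append_left hi, List.take_append_of_le_length hi.le] at h
    · simpa using hinf Y.length (by simp)
  · rintro ⟨⟨-, hinf⟩, hw, rfl⟩
    refine ⟨by simp, fun i hi => ?_⟩
    rcases Nat.lt_or_ge i Y.length with hlt | hge
    · rw [List.getElem_append_left hlt, List.take_append_of_le_length hlt.le]
      exact hinf i hlt
    · obtain rfl : i = Y.length := by
        simp only [List.length_append, List.length_singleton] at hi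
        omega
      simpa using hw

theorem square {a d : α} {T w : List α}
    (hY : IsLZLikeParsing (a :: T ++ [d]) (Y ++ [w])) (hw : w ≠ []) :
    IsLZLikeParsing (a :: T ++ a :: T ++ [d]) (Y ++ [w.dropLast ++ [a], T ++ [d]]) := by
  obtain ⟨hYlike, hwinf, hflat⟩ := append_singleton_iff.mp hY
  have hprefix : Y.flatten ++ w.dropLast = a :: T := by
    rw [← List.dropLast_append_getLast hw, ← List.append_assoc] at hflat
    exact List.append_inj_left' hflat rfl
  have hfirst : IsLZLikeParsing (a :: T ++ [a]) (Y ++ [w.dropLast ++ [a]]) :=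
    append_singleton_iff.mpr ⟨hYlike, by simpa using hwinf, by simp [← hprefix]⟩
  rw [show Y ++ [w.dropLast ++ [a], T ++ [d]] = Y ++ [w.dropLast ++ [a]] ++ [T ++ [d]] by simp,
    append_singleton_iff, hfirst.flatten_eq, List.dropLast_concat]
  exact ⟨hfirst, ⟨[a], [a], rfl⟩, by simp⟩

end IsLZLikeParsing

namespace IsLZ77Parsing

variable {S : List α} {Z Y : List (List α)}

theorem isLZLikeParsing (hZ : IsLZ77Parsing S Z) : IsLZLikeParsing S Z :=
  ⟨hZ.1, fun i hi => hZ.2.2.1 ⟨i, hi⟩⟩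

theorem length_lt_length_getElem (hZ : IsLZ77Parsing S Z) {i : ℕ} (hi : i < Z.length)
    {w : List α} (hprefix : w <+: S.drop (phraseStart Z i))
    (hinfix : w <:+: S.take (phraseStart Z i)) :
    w.length < Z[i].length := by
  rw [← hZ.1, ← flatten_drop_eq_drop_phraseStart] at hprefix
  rw [← hZ.1, ← flatten_take_eq_take_phraseStart] at hinfix
  exact hZ.2.2.2 ⟨i, hi⟩ w hprefix hinfix

theorem phraseStart_le (hZ : IsLZ77Parsing S Z) (hY : IsLZLikeParsing S Y) :
    ∀ {i}, i ≤ Y.length → i ≤ Z.length → phraseStart Y i ≤ phraseStart Z i := by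
  intro i hiY hiZ
  induction i with
  | zero => simp [phraseStart]
  | succ i ih =>
    have hle := ih (by omega) (by omega)
    -- the part of `Y[i].dropLast` from `phraseStart Z i` on occurs earlier and starts the
    -- remaining text, so it is shorter than the greedy phrase `Z[i]`
    have hoccurs := List.take_drop_infix_take_of_le hle (hY.take_drop_phraseStart_infix hiY)
    have hlt := hZ.length_lt_length_getElem hiZ (List.take_prefix _ _) hoccurs
    have hend := phraseStart_le_length Y (i := i + 1)
    rw [hY.flatten_eq] at hend
    simp only [List.length_take, List.length_drop] at hlt
    rw [phraseStart_succ Y hiY] at hend ⊢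
    rw [phraseStart_succ Z hiZ]
    omega

theorem length_le (hZ : IsLZ77Parsing S Z) (hY : IsLZLikeParsing S Y) :
    Z.length ≤ Y.length := by
  by_contra! hlt
  have hle := hZ.phraseStart_le hY le_rfl hlt.le
  have hend := phraseStart_le_length Z (i := Y.length + 1)
  have hne := List.length_pos_iff.mpr (hZ.2.1 _ (List.getElem_mem hlt))
  rw [phraseStart_length, hY.flatten_eq] at hle
  rw [phraseStart_succ Z hlt, hZ.1] at hend
  omega

end IsLZ77Parsing

end

theorem lz77_square_le_general (T : List α) (d : α)
    (Z Z' : List (List α))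
    (h : IsLZ77Parsing (T ++ T ++ [d]) Z)
    (h' : IsLZ77Parsing (T ++ [d]) Z') :
    Z.length ≤ Z'.length + 1 := by
  cases T with
  | nil => exact (h.length_le h'.isLZLikeParsing).trans (Nat.le_succ _)
  | cons a T =>
    obtain ⟨Y, w, rfl⟩ : ∃ Y w, Z' = Y ++ [w] := by
      rcases List.eq_nil_or_concat' Z' with rfl | hsnoc
      · simpa using h'.1
      · exact hsnoc
    have hw : w ≠ [] := h'.2.1 w (by simp)
    simpa using h.length_le (h'.isLZLikeParsing.square hw)

/-- `H^{LZ77}(TT$) ≤ H^{LZ77}(T$) + 1`. -/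
theorem lz77_square_le (T : List α) (d : α) (hd : d ∉ T)
    (Z Z' : List (List α))
    (h : IsLZ77Parsing (T ++ T ++ [d]) Z)
    (h' : IsLZ77Parsing (T ++ [d]) Z') :
    Z.length ≤ Z'.length + 1 :=
  lz77_square_le_general T d Z Z' h h'
end

section
/- In any LZ-End parsing, the copy-height H is bounded by the length of the longest phrase: H ≤ max_{1≤p≤n'} |Z[p]|. Equivalently, defining the copy-depth array C by C[b] = 1 at each phrase end b and C[k] = C[(k−a)+c] + 1 for positions k inside a phrase T[a..b] with source T[c..d] (d being a phrase end), one has C[i] ≤ C[i+1] + 1 for all 1 ≤ i < n, which implies the bound. -/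
/-!
The source of an interior position of a phrase lies strictly before it, so `C i ≤ C (i + 1) + 1`
follows by strong induction on `i`: if `i + 1` is interior too, `i` and `i + 1` are copies of
consecutive positions; if `i + 1` ends the phrase, then `i` is a copy of the last character of the
source, which in LZ-End is a phrase end and has depth `1`. Walking back from the phrase end, where
`C = 1`, bounds `C` inside a phrase by the phrase length.
-/

theorem Nat.le_add_sub_of_forall_le_succ_add_one {f : ℕ → ℕ} {n : ℕ}
    (hf : ∀ i, i + 1 < n → f i ≤ f (i + 1) + 1) {i j : ℕ} (hij : i ≤ j) (hj : j < n) :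
    f i ≤ f j + (j - i) := by
  induction j, hij using Nat.le_induction with
  | base => simp
  | succ j hij ih =>
    have := hf j hj
    have := ih (by omega)
    omega

namespace LZEnd

variable {α : Type*}

/-- Phrase `q` of `Z.flatten` occupies the positions `[phraseStart Z q, phraseStart Z (q + 1))`. -/
def phraseStart (Z : List (List α)) (q : ℕ) : ℕ := (Z.take q).flatten.length

theorem phraseStart_zero (Z : List (List α)) : phraseStart Z 0 = 0 := by
  simp [phraseStart]

theorem phraseStart_length (Z : List (List α)) : phraseStart Z Z.length = Z.flatten.length := by
  rw [phraseStart, List.take_length]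

theorem phraseStart_succ (Z : List (List α)) (p : Fin Z.length) :
    phraseStart Z (p + 1) = phraseStart Z p + (Z.get p).length := by
  rw [phraseStart, phraseStart, List.take_add_one, List.getElem?_eq_getElem p.2,
    List.flatten_append]
  simp

theorem monotone_phraseStart (Z : List (List α)) : Monotone (phraseStart Z) :=
  monotone_nat_of_le_succ fun q => by simp [phraseStart, List.take_add_one]

theorem exists_phraseStart_le_lt_succ (Z : List (List α)) {m i : ℕ}
    (hi : i < phraseStart Z m) : ∃ q < m, phraseStart Z q ≤ i ∧ i < phraseStart Z (q + 1) := by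
  induction m with
  | zero => simp [phraseStart_zero] at hi
  | succ m ih =>
    by_cases him : i < phraseStart Z m
    · obtain ⟨q, hqm, hq⟩ := ih him
      exact ⟨q, by omega, hq⟩
    · exact ⟨m, by omega, by omega, hi⟩

theorem exists_phrase_mem (Z : List (List α)) {i : ℕ} (hi : i < Z.flatten.length) :
    ∃ p : Fin Z.length, phraseStart Z p ≤ i ∧ i < phraseStart Z (p + 1) := by
  rw [← phraseStart_length] at hi
  obtain ⟨q, hq, hqi⟩ := exists_phraseStart_le_lt_succ Z hi
  exact ⟨⟨q, hq⟩, hqi⟩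

theorem length_le_foldr_max {Z : List (List α)} {w : List α} (hw : w ∈ Z) :
    w.length ≤ Z.foldr (fun w m => max w.length m) 0 := by
  rw [← List.foldr_map (f := List.length) (g := max)]
  exact List.le_max_of_le' 0 (List.mem_map_of_mem hw) le_rfl

/-- `C` is the copy-depth array of the LZ-End parsing `Z` in which phrase `p` copies its
first `|Z[p]| - 1` characters from the text ending at the end of phrase `src p - 1`. -/
structure IsCopyDepth (Z : List (List α)) (src : Fin Z.length → ℕ) (C : ℕ → ℕ) : Prop where
  src_le : ∀ p : Fin Z.length, src p ≤ p
  length_sub_one_le : ∀ p : Fin Z.length, (Z.get p).length - 1 ≤ phraseStart Z (src p)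
  eq_one_of_end : ∀ p : Fin Z.length, C (phraseStart Z (p + 1) - 1) = 1
  eq_add_one_of_interior : ∀ p : Fin Z.length, ∀ k : ℕ, phraseStart Z p ≤ k →
    k + 1 < phraseStart Z (p + 1) →
    C k = C (k - phraseStart Z p + (phraseStart Z (src p) - ((Z.get p).length - 1))) + 1

namespace IsCopyDepth

variable {Z : List (List α)} {src : Fin Z.length → ℕ} {C : ℕ → ℕ}

theorem eq_one_of_add_one_eq (h : IsCopyDepth Z src C) (p : Fin Z.length) {i : ℕ}
    (hi : i + 1 = phraseStart Z (p + 1)) : C i = 1 := by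
  simpa [← hi] using h.eq_one_of_end p

theorem eq_one_of_phraseStart_sub_one (h : IsCopyDepth Z src C) {q : ℕ} (hq : 0 < q) (hqZ : q ≤ Z.length) :
    C (phraseStart Z q - 1) = 1 := by
  obtain ⟨q, rfl⟩ := Nat.exists_eq_add_one_of_ne_zero hq.ne'
  exact h.eq_one_of_end ⟨q, hqZ⟩

theorem le_succ_add_one (h : IsCopyDepth Z src C) :
    ∀ i, i + 1 < Z.flatten.length → C i ≤ C (i + 1) + 1 := by
  intro i
  induction i using Nat.strong_induction_on with
  | _ i ih =>
  intro hi
  obtain ⟨p, hpi, hip⟩ := exists_phrase_mem Z (by omega : i < Z.flatten.length)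
  have hlen := phraseStart_succ Z p
  have hfit := h.length_sub_one_le p
  have hsrc : phraseStart Z (src p) ≤ phraseStart Z p := monotone_phraseStart Z (h.src_le p)
  rcases (by omega : i + 1 = phraseStart Z (p + 1) ∨ i + 2 = phraseStart Z (p + 1) ∨
      i + 2 < phraseStart Z (p + 1)) with hend | hlast | hinner
  · rw [h.eq_one_of_add_one_eq p hend]
    omega
  · have hsrc_pos : 0 < src p := Nat.pos_of_ne_zero fun h0 => by
      simp only [h0, phraseStart_zero] at hfit
      omega
    rw [h.eq_add_one_of_interior p i hpi (by omega), h.eq_one_of_add_one_eq p hlast,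
      show i - phraseStart Z p + (phraseStart Z (src p) - ((Z.get p).length - 1)) =
        phraseStart Z (src p) - 1 by omega,
      h.eq_one_of_phraseStart_sub_one hsrc_pos ((h.src_le p).trans p.2.le)]
  · have hs := h.eq_add_one_of_interior p i hpi (by omega)
    have hs' := h.eq_add_one_of_interior p (i + 1) (by omega) hinner
    set s := i - phraseStart Z p + (phraseStart Z (src p) - ((Z.get p).length - 1))
    rw [show i + 1 - phraseStart Z p + (phraseStart Z (src p) - ((Z.get p).length - 1)) =
      s + 1 by omega] at hs'
    have := ih s (by omega) (by omega)
    omega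

theorem le_length (h : IsCopyDepth Z src C) (p : Fin Z.length) {i : ℕ}
    (hpi : phraseStart Z p ≤ i) (hip : i < phraseStart Z (p + 1)) : C i ≤ (Z.get p).length := by
  have hlen := phraseStart_succ Z p
  have hend : phraseStart Z (p + 1) ≤ Z.flatten.length := by
    rw [← phraseStart_length]
    exact monotone_phraseStart Z p.2
  have := Nat.le_add_sub_of_forall_le_succ_add_one h.le_succ_add_one
    (by omega : i ≤ phraseStart Z (p + 1) - 1) (by omega)
  rw [h.eq_one_of_end p] at this
  omega

end IsCopyDepth

end LZEnd

open LZEnd in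
theorem lzEnd_height_le_max_phrase_general {α : Type*}
    (Z : List (List α))
    (src : Fin Z.length → ℕ)
    (hsrc : ∀ p : Fin Z.length, src p ≤ (p : ℕ))
    (hfit : ∀ p : Fin Z.length,
      (Z.get p).length - 1 ≤ (Z.take (src p)).flatten.length)
    (C : ℕ → ℕ)
    (hCend : ∀ p : Fin Z.length,
      C ((Z.take ((p : ℕ) + 1)).flatten.length - 1) = 1)
    (hCcopy : ∀ p : Fin Z.length, ∀ k : ℕ,
      (Z.take (p : ℕ)).flatten.length ≤ k →
      k + 1 < (Z.take ((p : ℕ) + 1)).flatten.length →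
      C k = C (k - (Z.take (p : ℕ)).flatten.length +
        ((Z.take (src p)).flatten.length - ((Z.get p).length - 1))) + 1) :
    (∀ i : ℕ, i + 1 < Z.flatten.length → C i ≤ C (i + 1) + 1) ∧
    (∀ i : ℕ, i < Z.flatten.length →
      C i ≤ Z.foldr (fun w m => max w.length m) 0) := by
  have h : IsCopyDepth Z src C := ⟨hsrc, hfit, hCend, hCcopy⟩
  refine ⟨h.le_succ_add_one, fun i hi => ?_⟩
  obtain ⟨p, hpi, hip⟩ := exists_phrase_mem Z hi
  exact (h.le_length p hpi hip).trans (length_le_foldr_max (Z.get_mem p))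

/-- In an LZ-End parsing `T = Z[1]⋯Z[n']`, where phrase `p` (0-based)
occupies positions `[E p, E (p+1))` with `E q = |Z[1]⋯Z[q]|`, and its
source ends at the end of phrase `src p ≤ p` (an end-of-phrase position),
the copy-depth array `C` — defined by `C = 1` at every phrase end and
`C[k] = C[k - a + c] + 1` for interior positions, `c` being the source
start — satisfies `C[i] ≤ C[i+1] + 1`, and `C` is bounded by the length
of the longest phrase. -/
theorem lzEnd_height_le_max_phrase {α : Type*} [DecidableEq α]
    (Z : List (List α)) (hne : ∀ w ∈ Z, w ≠ [])
    (src : Fin Z.length → ℕ)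
    (hsrc : ∀ p : Fin Z.length, src p ≤ (p : ℕ))
    (hfit : ∀ p : Fin Z.length,
      (Z.get p).length - 1 ≤ (Z.take (src p)).flatten.length)
    (C : ℕ → ℕ)
    (hCend : ∀ p : Fin Z.length,
      C ((Z.take ((p : ℕ) + 1)).flatten.length - 1) = 1)
    (hCcopy : ∀ p : Fin Z.length, ∀ k : ℕ,
      (Z.take (p : ℕ)).flatten.length ≤ k →
      k + 1 < (Z.take ((p : ℕ) + 1)).flatten.length →
      C k = C (k - (Z.take (p : ℕ)).flatten.length +
        ((Z.take (src p)).flatten.length - ((Z.get p).length - 1))) + 1) :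
    (∀ i : ℕ, i + 1 < Z.flatten.length → C i ≤ C (i + 1) + 1) ∧
    (∀ i : ℕ, i < Z.flatten.length →
      C i ≤ Z.foldr (fun w m => max w.length m) 0) :=
  lzEnd_height_le_max_phrase_general Z src hsrc hfit C hCend hCcopy
end

section
/- The Thue–Morse sequence, defined by T_1 = 0 and T_n = T_{n−1}·\overline{T_{n−1}} (where the overline denotes bitwise complement), is overlap-free: it contains no factor of the form c·X·c·X·c where c is a single character and X a (possibly empty) string. In particular it is cube-free. -/
/-- The Thue–Morse sequence: `thue k` is the parity of the number of `1`
bits in the binary representation of `k`. -/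
def thue (k : ℕ) : Bool := ((Nat.digits 2 k).count 1) % 2 == 1

/-- The factor of the Thue–Morse word starting at position `i`, of length
`len`. -/
def tmSeg (i len : ℕ) : List Bool := (List.range len).map (fun j => thue (i + j))

lemma thue_even (k : ℕ) : thue (2 * k) = thue k := by
  rcases Nat.eq_zero_or_pos k with h | h
  · simp [h]
  · unfold thue
    rw [Nat.digits_def' (by norm_num) (by omega)]
    have h1 : 2 * k % 2 = 0 := by omega
    have h2 : 2 * k / 2 = k := by omega
    rw [h1, h2, List.count_cons]
    norm_num

lemma thue_odd (k : ℕ) : thue (2 * k + 1) = !thue k := by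
  unfold thue
  rw [Nat.digits_def' (by norm_num) (by omega)]
  have h1 : (2 * k + 1) % 2 = 1 := by omega
  have h2 : (2 * k + 1) / 2 = k := by omega
  rw [h1, h2, List.count_cons]
  rcases Nat.mod_two_eq_zero_or_one ((Nat.digits 2 k).count 1) with h | h <;>
    simp [Nat.add_mod, h]

lemma no_three (a : ℕ) : ¬ (thue a = thue (a+1) ∧ thue (a+1) = thue (a+2)) := by
  rintro ⟨h1, h2⟩
  rcases Nat.even_or_odd a with ⟨m, hm⟩ | ⟨m, hm⟩
  · have ha : a = 2 * m := by omega
    subst ha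
    rw [thue_odd, thue_even] at h1
    cases thue m <;> simp_all
  · have ha : a = 2 * m + 1 := by omega
    subst ha
    rw [show 2*m+1+1 = 2*(m+1) by ring, show 2*m+1+2 = 2*(m+1)+1 by ring,
        thue_even, thue_odd] at h2
    cases thue (m+1) <;> simp_all

lemma no_overlap : ∀ n, 1 ≤ n → ¬ ∃ k, ∀ j ≤ n, thue (k + j) = thue (k + j + n) := by
  intro n
  induction n using Nat.strong_induction_on with
  | _ n ih =>
    rintro hn ⟨k, hk⟩
    have key : ∀ x, k ≤ x → x ≤ k + n → thue x = thue (x + n) := by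
      intro x h1 h2
      have h3 := hk (x - k) (by omega)
      rw [show k + (x - k) = x by omega] at h3
      exact h3
    obtain ⟨m, hm⟩ : ∃ m, 2 * m = k ∨ 2 * m = k + 1 := by
      rcases Nat.even_or_odd k with ⟨t, ht⟩ | ⟨t, ht⟩
      · exact ⟨t, Or.inl (by omega)⟩
      · exact ⟨t + 1, Or.inr (by omega)⟩
    rcases Nat.even_or_odd n with ⟨q, hq⟩ | ⟨q, hq⟩
    · -- n even, n = 2q, q ≥ 1; descend
      have hq1 : 1 ≤ q := by omega
      rcases hm with hm | hm
      · refine ih q (by omega) hq1 ⟨m, fun j hj => ?_⟩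
        have h := key (2 * (m + j)) (by omega) (by omega)
        rw [show 2 * (m + j) + n = 2 * (m + j + q) by omega] at h
        rwa [thue_even, thue_even] at h
      · refine ih q (by omega) hq1 ⟨m - 1, fun j hj => ?_⟩
        have h := key (2 * (m - 1 + j) + 1) (by omega) (by omega)
        rw [show 2 * (m - 1 + j) + 1 + n = 2 * (m - 1 + j + q) + 1 by omega] at h
        rw [thue_odd, thue_odd] at h
        simpa using h
    · -- n odd
      rcases Nat.eq_or_lt_of_le hn with h1 | h1'
      · have e0 := hk 0 (by omega)
        have e1 := hk 1 (by omega)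
        rw [← h1] at e0 e1
        exact no_three k ⟨by simpa using e0, by simpa using e1⟩
      have hq1 : 1 ≤ q := by omega
      have A : thue m = !thue (m + q) := by
        have h := key (2 * m) (by omega) (by omega)
        rw [show 2 * m + n = 2 * (m + q) + 1 by omega] at h
        rwa [thue_even, thue_odd] at h
      have B : (!thue m) = thue (m + q + 1) := by
        have h := key (2 * m + 1) (by omega) (by omega)
        rw [show 2 * m + 1 + n = 2 * (m + q + 1) by omega] at h
        rwa [thue_odd, thue_even] at h
      have C : thue (m + 1) = !thue (m + q + 1) := by
        have h := key (2 * m + 2) (by omega) (by omega)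
        rw [show 2 * m + 2 = 2 * (m + 1) by ring,
            show 2 * (m + 1) + n = 2 * (m + q + 1) + 1 by omega] at h
        rwa [thue_even, thue_odd] at h
      have h01 : thue m = thue (m + 1) := by
        rw [C, ← B]; simp
      have h12 : thue (m + q) = thue (m + q + 1) := by
        rw [← B, A]; simp
      rcases Nat.eq_or_lt_of_le hq1 with hq2 | hq2
      · rw [← hq2] at h12
        exact no_three m ⟨h01, h12⟩
      · have D : (!thue (m + 1)) = thue (m + q + 2) := by
          have h := key (2 * m + 3) (by omega) (by omega)
          rw [show 2 * m + 3 = 2 * (m + 1) + 1 by ring,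
              show 2 * (m + 1) + 1 + n = 2 * (m + q + 2) by omega] at h
          rwa [thue_odd, thue_even] at h
        have E : thue (m + 2) = !thue (m + q + 2) := by
          have h := key (2 * m + 4) (by omega) (by omega)
          rw [show 2 * m + 4 = 2 * (m + 2) by ring,
              show 2 * (m + 2) + n = 2 * (m + q + 2) + 1 by omega] at h
          rwa [thue_even, thue_odd] at h
        refine no_three m ⟨h01, ?_⟩
        rw [show m + 1 + 1 = m + 2 by ring, E, ← D]
        simp

lemma tmSeg_getElem (i len j : ℕ) (hj : j < len) :
    (tmSeg i len)[j]'(by simp [tmSeg, hj]) = thue (i + j) := by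
  simp [tmSeg]

/-- The Thue–Morse sequence is overlap-free (no factor `c·X·c·X·c`); in
particular it is cube-free (no factor `X·X·X` with `X` nonempty). -/
theorem thueMorse_overlapFree :
    (¬ ∃ (c : Bool) (X : List Bool) (i : ℕ),
      tmSeg i (2 * X.length + 3) = [c] ++ X ++ [c] ++ X ++ [c]) ∧
    (¬ ∃ (X : List Bool) (i : ℕ), X ≠ [] ∧
      tmSeg i (3 * X.length) = X ++ X ++ X) := by
  constructor
  · rintro ⟨c, X, i, h⟩
    have h2 : tmSeg i (2 * X.length + 3) = ([c] ++ X ++ [c]) ++ (X ++ [c]) := by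
      rw [h]; simp
    have h3 : tmSeg i (2 * X.length + 3) =
        ([c] ++ X) ++ ([c] ++ X ++ [c]) := by
      rw [h]; simp
    refine no_overlap (X.length + 1) (by omega) ⟨i, fun j hj => ?_⟩
    have e1 : thue (i + j) = ([c] ++ X ++ [c])[j]'(by simp; omega) := by
      rw [← tmSeg_getElem i (2 * X.length + 3) j (by omega),
          List.getElem_of_eq h2 (by simp [tmSeg]; omega),
          List.getElem_append_left (by simp; omega)]
    have e2 : thue (i + j + (X.length + 1)) =
        ([c] ++ X ++ [c])[j]'(by simp; omega) := by
      rw [show i + j + (X.length + 1) = i + (j + (X.length + 1)) by ring,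
          ← tmSeg_getElem i (2 * X.length + 3) (j + (X.length + 1)) (by omega),
          List.getElem_of_eq h3 (by simp [tmSeg]; omega),
          List.getElem_append_right (by simp)]
      congr 1
      simp
    rw [e1, e2]
  · rintro ⟨X, i, hX, h⟩
    have hn1 : 1 ≤ X.length := List.length_pos_iff.mpr hX
    have h2 : tmSeg i (3 * X.length) = X ++ (X ++ X) := by rw [h]; simp
    have h3 : tmSeg i (3 * X.length) = (X ++ X) ++ X := by rw [h]
    refine no_overlap X.length hn1 ⟨i, fun j hj => ?_⟩
    have e1 : thue (i + j) = (X ++ X)[j]'(by simp; omega) := by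
      rw [← tmSeg_getElem i (3 * X.length) j (by omega),
          List.getElem_of_eq h3 (by simp [tmSeg]; omega),
          List.getElem_append_left (by simp; omega)]
    have e2 : thue (i + j + X.length) = (X ++ X)[j]'(by simp; omega) := by
      rw [show i + j + X.length = i + (j + X.length) by ring,
          ← tmSeg_getElem i (3 * X.length) (j + X.length) (by omega),
          List.getElem_of_eq h2 (by simp [tmSeg]; omega),
          List.getElem_append_right (by simp)]
      congr 1
      omega
    rw [e1, e2]
end
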